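/- For every integer k ≥ 0, the F-linear map φ_k : M_k → D defined on the basis by φ_k(m_j) = 1 for j even and φ_k(m_j) = x for j odd is a surjective homomorphism of D-D-bimodules; in particular, φ_k does not factor through the simple D-D-bimodule. -/

import Mathlib

open DualNumber TrivSqZeroExt

/-- Multiplication by `ε` on the dual numbers `D = F[x]/(x²)`, as an `F`-linear map.
Since `D` is commutative this is both the left and the right action of `x` on the
regular bimodule. -/
noncomputable def xD (F : Type) [Field F] : DualNumber F →ₗ[F] DualNumber F :=
  LinearMap.mulLeft F (eps : DualNumber F)

/-- The underlying `F`-vector space of the string bimodule `M_k`: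
coordinates indexed by `Fin (2*k+3)`, where the Lean index `j` corresponds to the
basis vector `m_{j+1}` of the paper. -/
abbrev Mcar (F : Type) [Field F] (k : ℕ) := Fin (2 * k + 3) → F

/-- The left action of `x` on `M_k`:  `x·m_{2j} = m_{2j+1}`, `x·m_odd = 0`. -/
def lM (F : Type) [Field F] (k : ℕ) : Mcar F k →ₗ[F] Mcar F k where
  toFun v := fun j =>
    if ((j : ℕ) % 2 = 0 ∧ (j : ℕ) ≠ 0) then
      v ⟨(j : ℕ) - 1, lt_of_le_of_lt (Nat.sub_le _ _) j.isLt⟩ else 0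
  map_add' u v := by
    funext j; by_cases h : ((j : ℕ) % 2 = 0 ∧ (j : ℕ) ≠ 0) <;> simp only [h, Pi.add_apply, Pi.smul_apply, RingHom.id_apply, if_true, if_false, ne_eq, not_false_eq_true, and_self, add_zero, smul_zero]
  map_smul' c v := by
    funext j; by_cases h : ((j : ℕ) % 2 = 0 ∧ (j : ℕ) ≠ 0) <;> simp only [h, Pi.add_apply, Pi.smul_apply, RingHom.id_apply, if_true, if_false, ne_eq, not_false_eq_true, and_self, add_zero, smul_zero]

/-- The right action of `x` on `M_k`:  `m_{2j}·x = m_{2j-1}`, `m_odd·x = 0`. -/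
def rM (F : Type) [Field F] (k : ℕ) : Mcar F k →ₗ[F] Mcar F k where
  toFun v := fun j =>
    if h : ((j : ℕ) % 2 = 0 ∧ (j : ℕ) < 2 * k + 2) then
      v ⟨(j : ℕ) + 1, Nat.succ_lt_succ h.2⟩ else 0
  map_add' u v := by
    funext j
    by_cases h : ((j : ℕ) % 2 = 0 ∧ (j : ℕ) < 2 * k + 2) <;> simp [h]
  map_smul' c v := by
    funext j
    by_cases h : ((j : ℕ) % 2 = 0 ∧ (j : ℕ) < 2 * k + 2) <;> simp [h]

/-- The basis vector `m_{j+1}` of `M_k`. -/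
def eM (F : Type) [Field F] (k : ℕ) (j : Fin (2 * k + 3)) : Mcar F k := Pi.single j 1

/-- A morphism of `D`-`D`-bimodules, where a bimodule is encoded as an `F`-vector
space together with the two (commuting, square-zero) operators giving the left and
right actions of `x`. -/
def IsBimodHom (F : Type) [Field F] {V W : Type} [AddCommGroup V] [Module F V]
    [AddCommGroup W] [Module F W] (lV rV : V →ₗ[F] V) (lW rW : W →ₗ[F] W)
    (f : V →ₗ[F] W) : Prop :=
  f ∘ₗ lV = lW ∘ₗ f ∧ f ∘ₗ rV = rW ∘ₗ f

/-- `f` factors through the simple `D`-`D`-bimodule, i.e. the one-dimensional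
bimodule `F` on which `x` acts as zero on both sides. -/
def FactorsThroughSimple (F : Type) [Field F] {V W : Type} [AddCommGroup V] [Module F V]
    [AddCommGroup W] [Module F W] (lV rV : V →ₗ[F] V) (lW rW : W →ₗ[F] W)
    (f : V →ₗ[F] W) : Prop :=
  ∃ (h : V →ₗ[F] F) (g : F →ₗ[F] W),
    IsBimodHom F lV rV 0 0 h ∧ IsBimodHom F 0 0 lW rW g ∧ f = g ∘ₗ h

/-- The bimodule homomorphism `φ_k : M_k → D`, sending `m_j` to `1` for `j` even and
to `x` for `j` odd (paper numbering). -/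
noncomputable def phi (F : Type) [Field F] (k : ℕ) : Mcar F k →ₗ[F] DualNumber F :=
  (Algebra.linearMap F (DualNumber F)) ∘ₗ
      (∑ j ∈ Finset.univ.filter (fun j : Fin (2 * k + 3) => (j : ℕ) % 2 = 1),
        LinearMap.proj j) +
    (TrivSqZeroExt.inrHom F F) ∘ₗ
      (∑ j ∈ Finset.univ.filter (fun j : Fin (2 * k + 3) => (j : ℕ) % 2 = 0),
        LinearMap.proj j)

/-!
Both actions of `x` on `M_k` send each basis vector `m_{2j}` to a basis vector of odd index and
kill the vectors of odd index, while `φ_k` sends `m_{2j}` to `1` and odd-indexed vectors to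
`x = x·1`; checking on the basis gives the bimodule property. The image contains `1 = φ_k(m_2)`
and `x = φ_k(m_1)`, so `φ_k` is onto. Finally, `x` annihilates the simple bimodule, so any map
factoring through it is killed by `x` on the left; composed with a surjection onto `D` this would
force `x·D = 0`, which fails since `x·1 = x`.
-/

section Bimodule

variable {F : Type} [Field F] {V W : Type} [AddCommGroup V] [Module F V]
  [AddCommGroup W] [Module F W] {lV rV : V →ₗ[F] V} {lW rW : W →ₗ[F] W} {f : V →ₗ[F] W}

theorem FactorsThroughSimple.comp_left_eq_zero (hf : FactorsThroughSimple F lV rV lW rW f) :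
    lW ∘ₗ f = 0 := by
  obtain ⟨h, g, -, ⟨hg, -⟩, rfl⟩ := hf
  rw [← LinearMap.comp_assoc, ← hg, LinearMap.comp_zero, LinearMap.zero_comp]

theorem not_factorsThroughSimple_of_surjective (hf : Function.Surjective f) (hlW : lW ≠ 0) :
    ¬ FactorsThroughSimple F lV rV lW rW f := fun hfac =>
  hlW <| (LinearMap.cancel_right hf).1 <| by rw [hfac.comp_left_eq_zero, LinearMap.zero_comp]

end Bimodule

section StringBimodule

variable (F : Type) [Field F] (k : ℕ)

theorem xD_one : xD F 1 = ε := mul_one _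

theorem xD_eps : xD F ε = 0 := eps_mul_eps

theorem xD_ne_zero : xD F ≠ 0 := fun h => by
  simpa [xD_one] using congrArg snd (LinearMap.congr_fun h 1)

variable {F k}

theorem Mcar.linearMap_ext {W : Type} [AddCommGroup W] [Module F W] {f g : Mcar F k →ₗ[F] W}
    (h : ∀ j, f (eM F k j) = g (eM F k j)) : f = g :=
  (Pi.basisFun F _).ext fun j => by simpa [eM] using h j

-- Lean's index `j` is the paper's `m_{j+1}`, so odd `j` here means an even paper index.
theorem lM_eM_of_odd {j : Fin (2 * k + 3)} (hj : (j : ℕ) % 2 = 1) :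
    lM F k (eM F k j) = eM F k ⟨j + 1, by omega⟩ := by
  funext i
  simp only [lM, eM, LinearMap.coe_mk, AddHom.coe_mk, Pi.single_apply, Fin.ext_iff]
  split_ifs <;> first | rfl | omega

theorem lM_eM_of_even {j : Fin (2 * k + 3)} (hj : (j : ℕ) % 2 = 0) : lM F k (eM F k j) = 0 := by
  funext i
  simp only [lM, eM, LinearMap.coe_mk, AddHom.coe_mk, Pi.single_apply, Pi.zero_apply, Fin.ext_iff]
  split_ifs <;> first | rfl | omega

theorem rM_eM_of_odd {j : Fin (2 * k + 3)} (hj : (j : ℕ) % 2 = 1) :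
    rM F k (eM F k j) = eM F k ⟨j - 1, by omega⟩ := by
  funext i
  simp only [rM, eM, LinearMap.coe_mk, AddHom.coe_mk, Pi.single_apply, Fin.ext_iff]
  split_ifs <;> first | rfl | omega

theorem rM_eM_of_even {j : Fin (2 * k + 3)} (hj : (j : ℕ) % 2 = 0) : rM F k (eM F k j) = 0 := by
  funext i
  simp only [rM, eM, LinearMap.coe_mk, AddHom.coe_mk, Pi.single_apply, Pi.zero_apply, Fin.ext_iff]
  split_ifs <;> first | rfl | omega

theorem phi_eM_of_odd {j : Fin (2 * k + 3)} (hj : (j : ℕ) % 2 = 1) : phi F k (eM F k j) = 1 := by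
  simp [phi, eM, hj, Pi.single_apply]

theorem phi_eM_of_even {j : Fin (2 * k + 3)} (hj : (j : ℕ) % 2 = 0) : phi F k (eM F k j) = ε := by
  simp [phi, eM, hj, Pi.single_apply]

theorem phi_comp_eq_xD_comp {T : Mcar F k →ₗ[F] Mcar F k}
    (hodd : ∀ j : Fin (2 * k + 3), (j : ℕ) % 2 = 1 →
      ∃ i : Fin (2 * k + 3), (i : ℕ) % 2 = 0 ∧ T (eM F k j) = eM F k i)
    (heven : ∀ j : Fin (2 * k + 3), (j : ℕ) % 2 = 0 → T (eM F k j) = 0) :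
    phi F k ∘ₗ T = xD F ∘ₗ phi F k := by
  refine Mcar.linearMap_ext fun j => ?_
  rw [LinearMap.comp_apply, LinearMap.comp_apply]
  rcases Nat.mod_two_eq_zero_or_one j with hj | hj
  · rw [heven j hj, phi_eM_of_even hj, xD_eps, map_zero]
  · obtain ⟨i, hi, hTj⟩ := hodd j hj
    rw [hTj, phi_eM_of_even hi, phi_eM_of_odd hj, xD_one]

variable (F k)

theorem phi_isBimodHom : IsBimodHom F (lM F k) (rM F k) (xD F) (xD F) (phi F k) :=
  ⟨phi_comp_eq_xD_comp (fun _ hj => ⟨_, by dsimp only; omega, lM_eM_of_odd hj⟩)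
      fun _ => lM_eM_of_even,
    phi_comp_eq_xD_comp (fun _ hj => ⟨_, by dsimp only; omega, rM_eM_of_odd hj⟩)
      fun _ => rM_eM_of_even⟩

theorem phi_surjective : Function.Surjective (phi F k) := fun d =>
  ⟨d.fst • eM F k ⟨1, by omega⟩ + d.snd • eM F k ⟨0, by omega⟩, by
    rw [map_add, map_smul, map_smul, phi_eM_of_odd rfl, phi_eM_of_even rfl]
    ext <;> simp⟩

end StringBimodule

theorem stmt_3 (F : Type) [Field F] (k : ℕ) :
    IsBimodHom F (lM F k) (rM F k) (xD F) (xD F) (phi F k) ∧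
      Function.Surjective (phi F k) ∧
      ¬ FactorsThroughSimple F (lM F k) (rM F k) (xD F) (xD F) (phi F k) :=
  ⟨phi_isBimodHom F k, phi_surjective F k,
    not_factorsThroughSimple_of_surjective (phi_surjective F k) (xD_ne_zero F)⟩
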